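/- arXiv:2306.14765 — 2 statements merged into one kernel-verified Lean document; each statement's English description precedes it below -/
import Mathlib

section
/- Let M be a positive integer and C : ℤ → ℂ an M-periodic function with mean value zero. Then the series F(t) = Σ_{n≥1} C(n)·e^{-n²t} converges for all t > 0 and lim_{t → 0⁺} F(t) = L(0, C) = -Σ_{n=1}^M C(n)·(n/M - 1/2). -/
open Complex Filter Real

-- generic Abel summation
lemma abel_sum (a φ : ℕ → ℂ) (N : ℕ) :
    ∑ n ∈ Finset.range N, a n * φ n =
      (∑ n ∈ Finset.range N, a n) * φ N +
        ∑ n ∈ Finset.range N, (∑ k ∈ Finset.range (n + 1), a k) * (φ n - φ (n + 1)) := by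
  induction N with
  | zero => simp
  | succ N ih =>
    rw [Finset.sum_range_succ, ih, Finset.sum_range_succ (f := fun n =>
      (∑ k ∈ Finset.range (n + 1), a k) * (φ n - φ (n + 1))),
      Finset.sum_range_succ (f := a)]
    ring

-- gaussian sum bound
lemma gauss_sum_le {s : ℝ} (hs : 0 < s) :
    ∑' n : ℕ, Real.exp (-(s * ((n : ℝ) + 1) ^ 2)) ≤ Real.sqrt (π / s) / 2 := by
  apply tsum_le_of_sum_range_le (fun n => (Real.exp_pos _).le)
  intro n
  have h1 : (∑ i ∈ Finset.range n, Real.exp (-(s * ((i : ℝ) + 1) ^ 2)))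
      ≤ ∫ x in (0:ℝ)..(0 + n), Real.exp (-(s * x ^ 2)) := by
    have := AntitoneOn.sum_le_integral (x₀ := (0:ℝ)) (a := n)
      (f := fun x => Real.exp (-(s * x ^ 2))) ?_
    · convert this using 2 with i
      · norm_num
    · intro x hx y hy hxy
      apply Real.exp_le_exp.2
      simp only [neg_le_neg_iff]
      have hx0 : 0 ≤ x := by simpa using hx.1
      have : x^2 ≤ y^2 := by nlinarith
      nlinarith [hx.1, hy.1, mul_le_mul_of_nonneg_left (mul_self_le_mul_self hx0 hxy) hs.le]
  have h2 : (∫ x in (0:ℝ)..(0 + n), Real.exp (-(s * x ^ 2)))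
      ≤ ∫ x in Set.Ioi (0:ℝ), Real.exp (-(s * x ^ 2)) := by
    rw [zero_add, intervalIntegral.integral_of_le (by positivity)]
    apply MeasureTheory.setIntegral_mono_set
    · simpa only [neg_mul] using (integrable_exp_neg_mul_sq hs).integrableOn
    · filter_upwards with x using (Real.exp_pos _).le
    · filter_upwards with x hx using Set.Ioc_subset_Ioi_self hx
  have h3 : (∫ x in Set.Ioi (0:ℝ), Real.exp (-(s * x ^ 2))) = Real.sqrt (π / s) / 2 := by
    simpa only [neg_mul] using integral_gaussian_Ioi s
  linarith

lemma sec_diff_le {t : ℝ} (ht : 0 < t) (n : ℕ) :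
    |Real.exp (-(t * ((n:ℝ) + 1) ^ 2)) - 2 * Real.exp (-(t * ((n:ℝ) + 2) ^ 2))
      + Real.exp (-(t * ((n:ℝ) + 3) ^ 2))|
      ≤ 20 * t * Real.exp (-(t / 2 * ((n:ℝ) + 1) ^ 2)) := by
  set a : ℝ := ((n:ℝ) + 1) ^ 2 with ha
  have ha0 : (0:ℝ) ≤ a := by positivity
  set p : ℝ := t * (2 * (n:ℝ) + 3) with hp
  have hp0 : 0 ≤ p := by positivity
  have e2 : t * ((n:ℝ) + 2) ^ 2 = t * a + p := by rw [ha, hp]; ring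
  have e3 : t * ((n:ℝ) + 3) ^ 2 = t * a + (2 * p + 2 * t) := by rw [ha, hp]; ring
  rw [e2, e3]
  have key : |1 - 2 * Real.exp (-p) + Real.exp (-(2 * p + 2 * t))| ≤ p ^ 2 + 2 * t := by
    have h1 : (1 - Real.exp (-p)) ^ 2 ≤ p ^ 2 := by
      have l1 : Real.exp (-p) ≤ 1 := Real.exp_le_one_iff.2 (by linarith)
      have l2 : 1 - p ≤ Real.exp (-p) := by
        have := Real.add_one_le_exp (-p); linarith
      nlinarith
    have h2 : 0 ≤ Real.exp (-(2*p)) - Real.exp (-(2 * p + 2 * t)) := by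
      have := Real.exp_le_exp.2 (show -(2*p+2*t) ≤ -(2*p) by linarith)
      linarith
    have h3 : Real.exp (-(2*p)) - Real.exp (-(2 * p + 2 * t)) ≤ 2 * t := by
      have l1 : Real.exp (-(2*p)) ≤ 1 := Real.exp_le_one_iff.2 (by linarith)
      have l2 : 1 - 2*t ≤ Real.exp (-(2*t)) := by
        have := Real.add_one_le_exp (-(2*t)); linarith
      have : Real.exp (-(2 * p + 2 * t)) = Real.exp (-(2*p)) * Real.exp (-(2*t)) := by
        rw [← Real.exp_add]; ring_nf
      rw [this]
      nlinarith [Real.exp_pos (-(2*p)), Real.exp_pos (-(2*t))]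
    have expand : 1 - 2 * Real.exp (-p) + Real.exp (-(2 * p + 2 * t))
        = (1 - Real.exp (-p)) ^ 2 - (Real.exp (-(2*p)) - Real.exp (-(2 * p + 2 * t))) := by
      have : Real.exp (-(2*p)) = Real.exp (-p) ^ 2 := by
        rw [← Real.exp_nat_mul]; ring_nf
      rw [this]; ring
    rw [expand]
    rw [abs_sub_le_iff]
    constructor
    · nlinarith [sq_nonneg (1 - Real.exp (-p))]
    · nlinarith [sq_nonneg p]
  have factor : Real.exp (-(t * a)) - 2 * Real.exp (-(t * a + p))
      + Real.exp (-(t * a + (2 * p + 2 * t)))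
      = Real.exp (-(t * a)) * (1 - 2 * Real.exp (-p) + Real.exp (-(2 * p + 2 * t))) := by
    rw [show -(t*a+p) = -(t*a) + -p by ring,
      show -(t*a+(2*p+2*t)) = -(t*a) + -(2*p+2*t) by ring, Real.exp_add, Real.exp_add]
    ring
  rw [factor, abs_mul, abs_of_pos (Real.exp_pos _)]
  have step1 : Real.exp (-(t * a)) * |1 - 2 * Real.exp (-p) + Real.exp (-(2 * p + 2 * t))|
      ≤ Real.exp (-(t * a)) * (p ^ 2 + 2 * t) :=
    mul_le_mul_of_nonneg_left key (Real.exp_pos _).le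
  refine step1.trans ?_
  -- p^2 ≤ 9 t^2 a
  have hpa : p ^ 2 ≤ 9 * t ^ 2 * a := by
    rw [hp, ha]
    nlinarith [mul_nonneg (sq_nonneg t) (Nat.cast_nonneg (α := ℝ) n),
      mul_nonneg (sq_nonneg t) (sq_nonneg ((n:ℝ)))]
  -- t^2 * a * exp (-(t*a)) ≤ 2*t*exp (-(t/2 * a))
  have hu : t ^ 2 * a * Real.exp (-(t * a)) ≤ 2 * t * Real.exp (-(t / 2 * a)) := by
    set u : ℝ := t / 2 * a with hudef
    have hu0 : 0 ≤ u := by positivity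
    have h1 : u * Real.exp (-u) ≤ 1 := by
      have h2 : u ≤ Real.exp u := by have := Real.add_one_le_exp u; linarith
      have h3 := Real.exp_pos u
      rw [Real.exp_neg]
      have := (div_le_one h3).2 h2
      rw [div_eq_mul_inv] at this
      exact this
    have hrw : Real.exp (-(t * a)) = Real.exp (-u) * Real.exp (-u) := by
      rw [← Real.exp_add, hudef]; ring_nf
    have hta : t ^ 2 * a = 2 * t * u := by rw [hudef]; ring
    rw [hrw, hta]
    calc 2 * t * u * (Real.exp (-u) * Real.exp (-u))
        = 2 * t * (u * Real.exp (-u)) * Real.exp (-u) := by ring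
      _ ≤ 2 * t * 1 * Real.exp (-u) := by
          apply mul_le_mul_of_nonneg_right _ (Real.exp_pos _).le
          apply mul_le_mul_of_nonneg_left h1 (by positivity)
      _ = 2 * t * Real.exp (-u) := by ring
  have hmono : Real.exp (-(t * a)) ≤ Real.exp (-(t / 2 * a)) := by
    apply Real.exp_le_exp.2; nlinarith
  have hepos := (Real.exp_pos (-(t*a))).le
  calc Real.exp (-(t * a)) * (p ^ 2 + 2 * t)
      ≤ Real.exp (-(t * a)) * (9 * t ^ 2 * a + 2 * t) := by
        apply mul_le_mul_of_nonneg_left _ hepos; linarith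
    _ = 9 * (t ^ 2 * a * Real.exp (-(t * a))) + 2 * t * Real.exp (-(t * a)) := by ring
    _ ≤ 9 * (2 * t * Real.exp (-(t / 2 * a))) + 2 * t * Real.exp (-(t / 2 * a)) := by
        have := mul_le_mul_of_nonneg_left hmono (show (0:ℝ) ≤ 2*t by positivity)
        linarith
    _ = 20 * t * Real.exp (-(t / 2 * a)) := by ring

section helpers
variable {M : ℕ} {C : ℤ → ℂ}

lemma img_range (M : ℕ) : Finset.image (fun r : ℕ => (1:ℤ) + r) (Finset.range M)
    = Finset.Icc 1 (M:ℤ) := by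
  ext x
  simp only [Finset.mem_image, Finset.mem_range, Finset.mem_Icc]
  constructor
  · rintro ⟨r, hr, rfl⟩; omega
  · intro hx; exact ⟨(x - 1).toNat, by omega, by omega⟩

lemma sum_range_eq_icc (C : ℤ → ℂ) (M : ℕ) :
    ∑ r ∈ Finset.range M, C (1 + r) = ∑ n ∈ Finset.Icc 1 (M:ℤ), C n := by
  rw [← img_range M, Finset.sum_image]
  intro x _ y _ h
  have h' : (1:ℤ) + x = 1 + y := h
  omega

lemma blocks (hM : 0 < M) (hper : ∀ n : ℤ, C (n + M) = C n)
    (hmean : ∑ n ∈ Finset.Icc 1 (M : ℤ), C n = 0) :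
    ∀ a : ℤ, ∑ r ∈ Finset.range M, C (a + r) = 0 := by
  obtain ⟨m, rfl⟩ : ∃ m, M = m + 1 := ⟨M - 1, by omega⟩
  have hstep : ∀ a : ℤ, ∑ r ∈ Finset.range (m+1), C ((a + 1) + r)
      = ∑ r ∈ Finset.range (m+1), C (a + r) := by
    intro a
    rw [Finset.sum_range_succ, Finset.sum_range_succ']
    have h2 : C ((a+1) + m) = C (a + 0) := by
      have := hper a
      push_cast at this
      rw [show a + ((m:ℤ)+1) = a + 1 + ↑m by ring] at this
      rw [this]; norm_num
    rw [h2]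
    have h3 : ∀ r : ℕ, a + 1 + (r:ℤ) = a + ↑(r+1) := by intro r; push_cast; ring
    simp only [h3, Nat.cast_zero]
  have base : ∑ r ∈ Finset.range (m+1), C (1 + r) = 0 := by
    rw [sum_range_eq_icc]; exact hmean
  have key : ∀ a : ℤ, ∑ r ∈ Finset.range (m+1), C (a + r)
      = ∑ r ∈ Finset.range (m+1), C (1 + r) := by
    intro a
    induction a using Int.induction_on with
    | zero => rw [← hstep 0]; norm_num
    | succ i ih => rw [hstep i, ih]
    | pred i ih =>
      have h := hstep (-(i:ℤ) - 1)
      rw [show -(i:ℤ) - 1 + 1 = -(i:ℤ) by ring] at h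
      rw [← h, ih]
  intro a; rw [key a, base]

lemma bounded (hM : 0 < M) (hper : ∀ n : ℤ, C (n + M) = C n) :
    ∃ B : ℝ, 0 ≤ B ∧ ∀ n : ℤ, ‖C n‖ ≤ B := by
  have hne : (Finset.range M).Nonempty := ⟨0, Finset.mem_range.2 hM⟩
  refine ⟨(Finset.range M).sup' hne (fun r => ‖C (r:ℤ)‖), ?_, ?_⟩
  · exact le_trans (norm_nonneg (C 0)) (Finset.le_sup' (f := fun r : ℕ => ‖C (r:ℤ)‖)
      (Finset.mem_range.2 hM))
  · have hmul : ∀ (k : ℤ) (n : ℤ), C (n + k * M) = C n := by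
      intro k
      induction k using Int.induction_on with
      | zero => intro n; norm_num
      | succ i ih =>
        intro n
        rw [show n + ((i:ℤ)+1) * M = (n + i * M) + M by ring, hper, ih]
      | pred i ih =>
        intro n
        have h := hper (n + (-(i:ℤ)-1) * M)
        rw [show n + (-(i:ℤ)-1)*M + (M:ℤ) = n + (-(i:ℤ))*M by ring] at h
        rw [← h, ih n]
    intro n
    have h0 : (0:ℤ) < (M:ℤ) := by exact_mod_cast hM
    have hmod := Int.emod_nonneg n (by omega : (M:ℤ) ≠ 0)
    have hlt := Int.emod_lt_of_pos n h0
    have heq : C n = C (n % M) := by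
      have := hmul (n / M) (n % M)
      rw [show n % (M:ℤ) + n / M * M = n by rw [mul_comm]; exact Int.emod_add_mul_ediv n M] at this
      exact this
    have hcast : ((n % (M:ℤ)).toNat : ℤ) = n % M := Int.toNat_of_nonneg hmod
    have hmem : (n % (M:ℤ)).toNat ∈ Finset.range M := Finset.mem_range.2 (by omega)
    calc ‖C n‖ = ‖C ((n % (M:ℤ)).toNat : ℤ)‖ := by rw [heq, hcast]
      _ ≤ _ := Finset.le_sup' (f := fun r : ℕ => ‖C (r:ℤ)‖) hmem
end helpers

lemma sum_sum_eq (f : ℕ → ℂ) (m : ℕ) :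
    ∑ N ∈ Finset.range m, ∑ k ∈ Finset.range (N + 1), f k
      = ∑ k ∈ Finset.range m, ((m : ℂ) - k) * f k := by
  induction m with
  | zero => simp
  | succ m ih =>
    rw [Finset.sum_range_succ, ih,
      Finset.sum_range_succ (f := fun k => ((↑(m+1):ℂ) - ↑k) * f k),
      Finset.sum_range_succ (f := f), ← add_assoc, ← Finset.sum_add_distrib]
    push_cast
    rw [Finset.sum_congr rfl (fun k _ => by ring :
      ∀ k ∈ Finset.range m, ((m:ℂ) - ↑k) * f k + f k = ((m:ℂ) + 1 - ↑k) * f k)]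
    ring

lemma block_shift_nat (M : ℕ) (f : ℕ → ℂ) (hf : ∀ n, f (n + M) = f n) :
    ∀ a : ℕ, ∑ r ∈ Finset.range M, f (a + r) = ∑ r ∈ Finset.range M, f r := by
  intro a
  induction a with
  | zero => simp
  | succ a ih =>
    rw [← ih]
    rcases Nat.eq_zero_or_pos M with h | h
    · simp [h]
    obtain ⟨m, rfl⟩ : ∃ m, M = m + 1 := ⟨M - 1, by omega⟩
    rw [Finset.sum_range_succ, Finset.sum_range_succ' (f := fun r => f (a + r))]
    have h2 : f (a + 1 + m) = f (a + 0) := by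
      have := hf a
      rw [show a + (m+1) = a + 1 + m by ring] at this
      rw [this]; norm_num
    rw [h2]
    have h3 : ∀ r : ℕ, a + 1 + r = a + (r + 1) := by omega
    simp only [h3]

lemma tsum_eq_lim {f : ℕ → ℂ} {a : ℂ} (hf : Summable f)
    (h : Tendsto (fun N => ∑ n ∈ Finset.range N, f n) atTop (nhds a)) : ∑' n, f n = a :=
  tendsto_nhds_unique hf.hasSum.tendsto_sum_nat h

lemma gauss_summable {s : ℝ} (hs : 0 < s) :
    Summable (fun n : ℕ => Real.exp (-(s * ((n : ℝ) + 1) ^ 2))) := by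
  have hlt : Real.exp (-s) < 1 := by rw [Real.exp_lt_one_iff]; linarith
  refine Summable.of_nonneg_of_le (fun n => (Real.exp_pos _).le) (fun n => ?_)
    ((summable_geometric_of_lt_one (Real.exp_pos _).le hlt).mul_left (Real.exp (-s)))
  · have h1 : Real.exp (-(s * ((n:ℝ) + 1) ^ 2)) ≤ Real.exp (-s * ((n:ℝ) + 1)) := by
      apply Real.exp_le_exp.2
      nlinarith [mul_nonneg hs.le (Nat.cast_nonneg (α := ℝ) n),
        mul_nonneg hs.le (sq_nonneg ((n:ℝ)))]
    refine h1.trans_eq ?_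
    rw [← Real.exp_nat_mul, ← Real.exp_add]
    congr 1
    ring

lemma sum_range_add' (f : ℕ → ℂ) (N K : ℕ) :
    ∑ n ∈ Finset.range (N + K), f n
      = ∑ n ∈ Finset.range N, f n + ∑ r ∈ Finset.range K, f (N + r) := by
  induction K with
  | zero => simp
  | succ K ih =>
    rw [show N + (K+1) = (N+K)+1 by ring, Finset.sum_range_succ, ih,
      Finset.sum_range_succ (f := fun r => f (N + r)), add_assoc]

lemma periodic_mod (f : ℕ → ℂ) (M : ℕ) (hf : ∀ N, f (N + M) = f N) :
    ∀ N, f N = f (N % M) := by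
  have key : ∀ q r : ℕ, f (r + q * M) = f r := by
    intro q
    induction q with
    | zero => simp
    | succ q ih => intro r; rw [show r + (q+1)*M = (r + q*M) + M by ring, hf, ih]
  intro N
  conv_lhs => rw [← Nat.mod_add_div N M]
  rw [show N % M + M * (N / M) = N % M + (N / M) * M by ring]
  exact key _ _

theorem stmt_3 (M : ℕ) (hM : 0 < M) (C : ℤ → ℂ)
    (hper : ∀ n : ℤ, C (n + M) = C n)
    (hmean : ∑ n ∈ Finset.Icc 1 (M : ℤ), C n = 0) :
    (∀ t : ℝ, 0 < t →
      Summable (fun n : ℕ => C (n + 1) * Complex.exp (-((n : ℂ) + 1) ^ 2 * (t : ℂ)))) ∧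
    Tendsto (fun t : ℝ =>
        ∑' n : ℕ, C (n + 1) * Complex.exp (-((n : ℂ) + 1) ^ 2 * (t : ℂ)))
      (nhdsWithin 0 (Set.Ioi 0))
      (nhds (-∑ n ∈ Finset.Icc 1 (M : ℤ), C n * ((n : ℂ) / (M : ℂ) - 1 / 2))) := by
  obtain ⟨B, hB0, hB⟩ := bounded hM hper
  have hblocks := blocks hM hper hmean
  set L : ℂ := -∑ n ∈ Finset.Icc 1 (M : ℤ), C n * ((n : ℂ) / (M : ℂ) - 1 / 2) with hLdef
  have hexp : ∀ (t : ℝ) (n : ℕ), Complex.exp (-((n : ℂ) + 1) ^ 2 * (t : ℂ))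
      = ((Real.exp (-(t * ((n:ℝ) + 1) ^ 2)) : ℝ) : ℂ) := by
    intro t n
    rw [Complex.ofReal_exp]
    congr 1
    push_cast
    ring
  have hsum1 : ∀ t : ℝ, 0 < t → Summable (fun n : ℕ =>
      C (n + 1) * Complex.exp (-((n : ℂ) + 1) ^ 2 * (t : ℂ))) := by
    intro t ht
    apply Summable.of_norm
    refine Summable.of_nonneg_of_le (fun n => norm_nonneg _) (fun n => ?_)
      ((gauss_summable ht).mul_left B)
    rw [norm_mul, hexp, Complex.norm_real, Real.norm_eq_abs,
      abs_of_pos (Real.exp_pos _)]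
    exact mul_le_mul_of_nonneg_right (hB _) (Real.exp_pos _).le
  refine ⟨hsum1, ?_⟩
  -- partial sums
  set S : ℕ → ℂ := fun N => ∑ n ∈ Finset.range N, C ((n:ℤ) + 1) with hSdef
  have hSM : ∀ N, S (N + M) = S N := by
    intro N
    simp only [hSdef]
    rw [sum_range_add' _ N M]
    have hz : ∑ r ∈ Finset.range M, C (((N + r : ℕ) : ℤ) + 1) = 0 := by
      rw [Finset.sum_congr rfl (fun r _ => by push_cast; rw [show ((N:ℤ) + r + 1)
        = ((N:ℤ) + 1) + r by ring] :
        ∀ r ∈ Finset.range M, C (((N + r : ℕ) : ℤ) + 1) = C (((N:ℤ) + 1) + r))]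
      exact hblocks _
    rw [hz, add_zero]
  have hSb : ∀ N, ‖S N‖ ≤ M * B := by
    intro N
    rw [periodic_mod S M hSM N]
    calc ‖S (N % M)‖ ≤ ∑ n ∈ Finset.range (N % M), ‖C ((n:ℤ)+1)‖ := norm_sum_le _ _
      _ ≤ ∑ _n ∈ Finset.range (N % M), B := Finset.sum_le_sum fun n _ => hB _
      _ = ((N % M : ℕ) : ℝ) * B := by rw [Finset.sum_const, Finset.card_range, nsmul_eq_mul]
      _ ≤ M * B := by
          have h1 : ((N % M : ℕ) : ℝ) ≤ (M : ℝ) := by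
            exact_mod_cast (Nat.mod_lt N hM).le
          exact mul_le_mul_of_nonneg_right h1 hB0
  -- the identity ∑_{N<M} S (N+1) = M * L
  have hsum0 : ∑ k ∈ Finset.range M, C ((k:ℤ)+1) = 0 := by
    rw [← hmean, ← sum_range_eq_icc]
    exact Finset.sum_congr rfl fun k _ => by rw [add_comm]
  have hLM : ∑ N ∈ Finset.range M, S (N + 1) = (M : ℂ) * L := by
    have hMC : ((M:ℕ):ℂ) ≠ 0 := Nat.cast_ne_zero.2 hM.ne'
    have h1 : ∑ N ∈ Finset.range M, S (N+1)
        = ∑ k ∈ Finset.range M, ((M:ℂ) - k) * C ((k:ℤ)+1) := by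
      simp only [hSdef]
      exact sum_sum_eq (fun k => C ((k:ℤ)+1)) M
    have h2 : (M:ℂ) * L = ∑ k ∈ Finset.range M, ((M:ℂ)/2 - ((k:ℂ)+1)) * C ((k:ℤ)+1) := by
      rw [hLdef, mul_neg, Finset.mul_sum]
      rw [← Finset.sum_neg_distrib]
      rw [← sum_range_eq_icc (fun n => -((M:ℂ) * (C n * ((n : ℂ) / (M : ℂ) - 1 / 2)))) M]
      refine Finset.sum_congr rfl fun k _ => ?_
      rw [show (1:ℤ) + k = (k:ℤ) + 1 by ring]
      push_cast
      field_simp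
      ring
    rw [h1, h2]
    rw [Finset.sum_congr rfl (fun k _ => by ring :
      ∀ k ∈ Finset.range M, ((M:ℂ) - k) * C ((k:ℤ)+1)
        = ((M:ℂ)/2 - ((k:ℂ)+1)) * C ((k:ℤ)+1) + ((M:ℂ)/2 + 1) * C ((k:ℤ)+1)),
      Finset.sum_add_distrib, ← Finset.mul_sum, hsum0, mul_zero, add_zero]
  set B4 : ℝ := M * (M * B + ‖L‖) with hB4def
  have hB40 : 0 ≤ B4 := by positivity
  set K : ℝ := B4 * 20 * Real.sqrt (2 * π) with hKdef
  have key : ∀ t : ℝ, 0 < t →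
      ‖(∑' n : ℕ, C (n + 1) * Complex.exp (-((n : ℂ) + 1) ^ 2 * (t : ℂ)))
        - L * ((Real.exp (-t) : ℝ) : ℂ)‖ ≤ K * Real.sqrt t := by
    intro t ht
    set g : ℕ → ℝ := fun n => Real.exp (-(t * (n:ℝ)^2)) with hg
    set φ : ℕ → ℂ := fun n => ((g (n+1) : ℝ) : ℂ) with hφ
    have hφeq : ∀ n : ℕ, C ((n:ℤ)+1) * Complex.exp (-((n:ℂ)+1)^2*(t:ℂ))
        = C ((n:ℤ)+1) * φ n := by
      intro n
      rw [hexp]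
      congr 2
      simp only [hg]
      congr 1
      push_cast
      ring
    have hganti : ∀ n : ℕ, g (n+1) ≤ g n := by
      intro n
      apply Real.exp_le_exp.2
      push_cast
      nlinarith [Nat.cast_nonneg (α := ℝ) n, ht.le]
    have hgpos : ∀ n, 0 < g n := fun n => Real.exp_pos _
    have hg0 : Tendsto (fun N : ℕ => g N) atTop (nhds 0) := by
      apply Real.tendsto_exp_atBot.comp
      apply Filter.tendsto_neg_atTop_atBot.comp
      apply Tendsto.const_mul_atTop ht
      exact (tendsto_pow_atTop two_ne_zero).comp tendsto_natCast_atTop_atTop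
    have hg1 : Tendsto (fun N : ℕ => g (N + 1)) atTop (nhds 0) :=
      hg0.comp (tendsto_add_atTop_nat 1)
    have hψnn : ∀ n : ℕ, 0 ≤ g (n+1) - g (n+2) := fun n => sub_nonneg.2 (hganti (n+1))
    have hψtel : ∀ N, ∑ n ∈ Finset.range N, (g (n+1) - g (n+2)) = g 1 - g (N+1) :=
      fun N => Finset.sum_range_sub' (f := fun n => g (n+1)) N
    have hψsum : Summable (fun n : ℕ => g (n+1) - g (n+2)) := by
      apply summable_of_sum_range_le (c := g 1) hψnn
      intro N
      rw [hψtel]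
      have := (hgpos (N+1)).le
      linarith
    have hψhas : HasSum (fun n : ℕ => g (n+1) - g (n+2)) (g 1) := by
      rw [hψsum.hasSum_iff_tendsto_nat]
      simp only [hψtel]
      simpa using hg1.const_sub (g 1)
    have hφsub : ∀ n : ℕ, φ n - φ (n+1) = ((g (n+1) - g (n+2) : ℝ) : ℂ) := by
      intro n
      rw [hφ]
      push_cast
      ring_nf
    have hψhasC : HasSum (fun n : ℕ => φ n - φ (n+1)) ((g 1 : ℝ) : ℂ) := by
      simp only [hφsub]
      exact Complex.hasSum_ofReal.2 hψhas
    have hψnorm : ∀ n : ℕ, ‖φ n - φ (n+1)‖ = g (n+1) - g (n+2) := by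
      intro n
      rw [hφsub, Complex.norm_real, Real.norm_eq_abs]
      exact abs_of_nonneg (hψnn n)
    -- first Abel summation
    have hs1 : Summable (fun n : ℕ => C ((n:ℤ)+1) * φ n) := (hsum1 t ht).congr hφeq
    have habel1 : ∀ N, ∑ n ∈ Finset.range N, C ((n:ℤ)+1) * φ n
        = S N * φ N + ∑ n ∈ Finset.range N, S (n+1) * (φ n - φ (n+1)) := by
      intro N
      simp only [hSdef]
      exact abel_sum (fun n => C ((n:ℤ)+1)) φ N
    have hSLnorm : ∀ n : ℕ, ‖S (n+1) - L‖ ≤ M * B + ‖L‖ := fun n =>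
      (norm_sub_le _ _).trans (add_le_add_left (hSb _) _)
    have hsumS : Summable (fun n : ℕ => S (n+1) * (φ n - φ (n+1))) := by
      apply Summable.of_norm
      refine Summable.of_nonneg_of_le (fun n => norm_nonneg _) (fun n => ?_)
        (hψsum.mul_left (M * B))
      rw [norm_mul, hψnorm]
      exact mul_le_mul_of_nonneg_right (hSb _) (hψnn n)
    have hbd1 : Tendsto (fun N => S N * φ N) atTop (nhds 0) := by
      refine squeeze_zero_norm (fun N => ?_) (by simpa using hg1.const_mul (M * B) :
        Tendsto (fun N : ℕ => (M * B) * g (N+1)) atTop (nhds 0))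
      rw [norm_mul, hφ]
      simp only []
      rw [Complex.norm_real, Real.norm_eq_abs, abs_of_pos (hgpos (N+1))]
      exact mul_le_mul_of_nonneg_right (hSb _) (hgpos _).le
    have hFt : (∑' n : ℕ, C (n + 1) * Complex.exp (-((n : ℂ) + 1) ^ 2 * (t : ℂ)))
        = ∑' n : ℕ, S (n+1) * (φ n - φ (n+1)) := by
      rw [tsum_congr hφeq]
      apply tsum_eq_lim hs1
      have h := hbd1.add hsumS.hasSum.tendsto_sum_nat
      rw [zero_add] at h
      exact h.congr fun N => (habel1 N).symm
    -- split off the mean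
    have hsumL : Summable (fun n : ℕ => L * (φ n - φ (n+1))) := hψhasC.summable.mul_left L
    have hsumD : Summable (fun n : ℕ => (S (n+1) - L) * (φ n - φ (n+1))) := by
      apply Summable.of_norm
      refine Summable.of_nonneg_of_le (fun n => norm_nonneg _) (fun n => ?_)
        (hψsum.mul_left (M * B + ‖L‖))
      rw [norm_mul, hψnorm]
      exact mul_le_mul_of_nonneg_right (hSLnorm n) (hψnn n)
    have hsplit : (∑' n : ℕ, S (n+1) * (φ n - φ (n+1)))
        = L * ((g 1 : ℝ) : ℂ) + ∑' n : ℕ, (S (n+1) - L) * (φ n - φ (n+1)) := by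
      calc (∑' n : ℕ, S (n+1) * (φ n - φ (n+1)))
          = ∑' n : ℕ, (L * (φ n - φ (n+1)) + (S (n+1) - L) * (φ n - φ (n+1))) :=
            tsum_congr fun n => by ring
        _ = (∑' n : ℕ, L * (φ n - φ (n+1))) + ∑' n : ℕ, (S (n+1) - L) * (φ n - φ (n+1)) :=
            Summable.tsum_add hsumL hsumD
        _ = L * ((g 1 : ℝ) : ℂ) + ∑' n : ℕ, (S (n+1) - L) * (φ n - φ (n+1)) := by
            rw [tsum_mul_left, hψhasC.tsum_eq]
    -- second Abel summation
    set T : ℕ → ℂ := fun N => ∑ n ∈ Finset.range N, (S (n+1) - L) with hT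
    have hTM : ∀ N, T (N + M) = T N := by
      intro N
      simp only [hT]
      rw [sum_range_add' _ N M]
      have hz : ∑ r ∈ Finset.range M, (S (N + r + 1) - L) = 0 := by
        rw [Finset.sum_sub_distrib, Finset.sum_const, Finset.card_range]
        have hsh : ∑ r ∈ Finset.range M, S (N + r + 1) = ∑ r ∈ Finset.range M, S (r + 1) := by
          have hf : ∀ n, S (n + 1 + M) = S (n + 1) := fun n => hSM (n+1)
          have := block_shift_nat M (fun r => S (r + 1)) (fun n => by
            simpa [show n + M + 1 = n + 1 + M by ring] using hf n) N
          simpa [show ∀ r : ℕ, N + r + 1 = (N + r) + 1 from fun r => rfl] using this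
        rw [hsh, hLM, nsmul_eq_mul, sub_self]
      rw [hz, add_zero]
    have hTb : ∀ N, ‖T N‖ ≤ B4 := by
      intro N
      rw [periodic_mod T M hTM N]
      calc ‖T (N % M)‖ ≤ ∑ n ∈ Finset.range (N % M), ‖S (n+1) - L‖ := norm_sum_le _ _
        _ ≤ ∑ _n ∈ Finset.range (N % M), (M * B + ‖L‖) :=
            Finset.sum_le_sum fun n _ => hSLnorm n
        _ = ((N % M : ℕ) : ℝ) * (M * B + ‖L‖) := by
            rw [Finset.sum_const, Finset.card_range, nsmul_eq_mul]
        _ ≤ B4 := by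
            rw [hB4def]
            have h1 : ((N % M : ℕ) : ℝ) ≤ (M : ℝ) := by
              exact_mod_cast (Nat.mod_lt N hM).le
            have h2 : (0:ℝ) ≤ M * B + ‖L‖ := by positivity
            exact mul_le_mul_of_nonneg_right h1 h2
    have habel2 : ∀ N, ∑ n ∈ Finset.range N, (S (n+1) - L) * (φ n - φ (n+1))
        = T N * (φ N - φ (N+1)) + ∑ n ∈ Finset.range N,
            T (n+1) * ((φ n - φ (n+1)) - (φ (n+1) - φ (n+2))) := by
      intro N
      simp only [hT]
      exact abel_sum (fun n => S (n+1) - L) (fun n => φ n - φ (n+1)) N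
    -- second difference bound
    have hsd : ∀ n : ℕ, ‖(φ n - φ (n+1)) - (φ (n+1) - φ (n+2))‖
        ≤ 20 * t * Real.exp (-(t/2 * ((n:ℝ)+1)^2)) := by
      intro n
      have hrw : (φ n - φ (n+1)) - (φ (n+1) - φ (n+2))
          = ((g (n+1) - 2 * g (n+2) + g (n+3) : ℝ) : ℂ) := by
        rw [hφ]
        push_cast
        ring_nf
      rw [hrw, Complex.norm_real, Real.norm_eq_abs]
      have e1 : g (n+1) = Real.exp (-(t * ((n:ℝ)+1)^2)) := by
        simp only [hg]; congr 1; push_cast; ring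
      have e2 : g (n+2) = Real.exp (-(t * ((n:ℝ)+2)^2)) := by
        simp only [hg]; congr 1; push_cast; ring
      have e3 : g (n+3) = Real.exp (-(t * ((n:ℝ)+3)^2)) := by
        simp only [hg]; congr 1; push_cast; ring
      rw [e1, e2, e3]
      exact sec_diff_le ht n
    have hsumT : Summable (fun n : ℕ =>
        T (n+1) * ((φ n - φ (n+1)) - (φ (n+1) - φ (n+2)))) := by
      apply Summable.of_norm
      refine Summable.of_nonneg_of_le (fun n => norm_nonneg _) (fun n => ?_)
        (((gauss_summable (half_pos ht)).mul_left (B4 * (20 * t))))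
      rw [norm_mul]
      calc ‖T (n+1)‖ * ‖(φ n - φ (n+1)) - (φ (n+1) - φ (n+2))‖
          ≤ B4 * (20 * t * Real.exp (-(t/2 * ((n:ℝ)+1)^2))) :=
            mul_le_mul (hTb _) (hsd n) (norm_nonneg _) hB40
        _ = B4 * (20 * t) * Real.exp (-(t/2 * ((n:ℝ)+1)^2)) := by ring
    have hbd2 : Tendsto (fun N => T N * (φ N - φ (N+1))) atTop (nhds 0) := by
      refine squeeze_zero_norm (fun N => ?_) (by simpa using hg1.const_mul B4 :
        Tendsto (fun N : ℕ => B4 * g (N+1)) atTop (nhds 0))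
      rw [norm_mul, hψnorm]
      calc ‖T N‖ * (g (N+1) - g (N+2)) ≤ B4 * (g (N+1) - g (N+2)) :=
            mul_le_mul_of_nonneg_right (hTb _) (hψnn N)
        _ ≤ B4 * g (N+1) := by
            have := (hgpos (N+2)).le
            nlinarith
    have hE : (∑' n : ℕ, (S (n+1) - L) * (φ n - φ (n+1)))
        = ∑' n : ℕ, T (n+1) * ((φ n - φ (n+1)) - (φ (n+1) - φ (n+2))) := by
      apply tsum_eq_lim hsumD
      have h := hbd2.add hsumT.hasSum.tendsto_sum_nat
      rw [zero_add] at h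
      exact h.congr fun N => (habel2 N).symm
    -- norm bound
    have hnorm : ‖∑' n : ℕ, (S (n+1) - L) * (φ n - φ (n+1))‖
        ≤ B4 * (20 * t) * (Real.sqrt (π / (t/2)) / 2) := by
      rw [hE]
      have h1 : Summable (fun n : ℕ =>
          ‖T (n+1) * ((φ n - φ (n+1)) - (φ (n+1) - φ (n+2)))‖) := by
        refine Summable.of_nonneg_of_le (fun n => norm_nonneg _) (fun n => ?_)
          (((gauss_summable (half_pos ht)).mul_left (B4 * (20 * t))))
        rw [norm_mul]
        calc ‖T (n+1)‖ * ‖(φ n - φ (n+1)) - (φ (n+1) - φ (n+2))‖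
            ≤ B4 * (20 * t * Real.exp (-(t/2 * ((n:ℝ)+1)^2))) :=
              mul_le_mul (hTb _) (hsd n) (norm_nonneg _) hB40
          _ = B4 * (20 * t) * Real.exp (-(t/2 * ((n:ℝ)+1)^2)) := by ring
      refine (norm_tsum_le_tsum_norm h1).trans ?_
      have h2 : (∑' n : ℕ, ‖T (n+1) * ((φ n - φ (n+1)) - (φ (n+1) - φ (n+2)))‖)
          ≤ ∑' n : ℕ, B4 * (20 * t) * Real.exp (-(t/2 * ((n:ℝ)+1)^2)) := by
        refine Summable.tsum_le_tsum (fun n => ?_) h1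
          (((gauss_summable (half_pos ht)).mul_left (B4 * (20 * t))))
        rw [norm_mul]
        calc ‖T (n+1)‖ * ‖(φ n - φ (n+1)) - (φ (n+1) - φ (n+2))‖
            ≤ B4 * (20 * t * Real.exp (-(t/2 * ((n:ℝ)+1)^2))) :=
              mul_le_mul (hTb _) (hsd n) (norm_nonneg _) hB40
          _ = B4 * (20 * t) * Real.exp (-(t/2 * ((n:ℝ)+1)^2)) := by ring
      refine h2.trans ?_
      rw [tsum_mul_left]
      have h3 := gauss_sum_le (half_pos ht)
      have h4 : (0:ℝ) ≤ B4 * (20 * t) := by positivity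
      exact mul_le_mul_of_nonneg_left h3 h4
    -- sqrt algebra
    have hsqrt : B4 * (20 * t) * (Real.sqrt (π / (t/2)) / 2) ≤ K * Real.sqrt t := by
      rw [hKdef]
      have ht' : (0:ℝ) < Real.sqrt t := Real.sqrt_pos.2 ht
      have h5 : π / (t/2) = (2*π) / t := by
        field_simp
      rw [h5, Real.sqrt_div (by positivity)]
      have h7 : t = Real.sqrt t * Real.sqrt t := (Real.mul_self_sqrt ht.le).symm
      calc B4 * (20 * t) * (Real.sqrt (2*π) / Real.sqrt t / 2)
          = B4 * (20 * (Real.sqrt t * Real.sqrt t)) * (Real.sqrt (2*π) / Real.sqrt t / 2) := by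
            rw [← h7]
        _ = (B4 * 10 * Real.sqrt (2*π)) * Real.sqrt t * (Real.sqrt t / Real.sqrt t) := by
            ring
        _ = (B4 * 10 * Real.sqrt (2*π)) * Real.sqrt t := by
            rw [div_self ht'.ne', mul_one]
        _ ≤ (B4 * 20 * Real.sqrt (2*π)) * Real.sqrt t := by
            have h8 : (0:ℝ) ≤ Real.sqrt (2*π) := Real.sqrt_nonneg _
            nlinarith [mul_nonneg (mul_nonneg hB40 h8) ht'.le]
    -- assemble
    have hgg : ((g 1 : ℝ) : ℂ) = ((Real.exp (-t) : ℝ) : ℂ) := by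
      norm_cast
      simp only [hg]
      norm_num
    rw [hFt, hsplit, hgg]
    rw [add_sub_cancel_left]
    exact hnorm.trans hsqrt
  -- final assembly
  have h1 : Tendsto (fun t : ℝ => L * ((Real.exp (-t) : ℝ) : ℂ))
      (nhdsWithin 0 (Set.Ioi 0)) (nhds L) := by
    have hc : Continuous fun t : ℝ => L * ((Real.exp (-t) : ℝ) : ℂ) :=
      continuous_const.mul
        (Complex.continuous_ofReal.comp (Real.continuous_exp.comp continuous_neg))
    have h0 := hc.tendsto 0
    rw [show L * ((Real.exp (-(0:ℝ)) : ℝ) : ℂ) = L by norm_num] at h0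
    exact h0.mono_left nhdsWithin_le_nhds
  have h2 : Tendsto (fun t : ℝ =>
      (∑' n : ℕ, C (n + 1) * Complex.exp (-((n : ℂ) + 1) ^ 2 * (t : ℂ)))
        - L * ((Real.exp (-t) : ℝ) : ℂ)) (nhdsWithin 0 (Set.Ioi 0)) (nhds 0) := by
    apply squeeze_zero_norm'
    · filter_upwards [self_mem_nhdsWithin] with t ht
      exact key t ht
    · have hc2 : Tendsto (fun t : ℝ => K * Real.sqrt t) (nhds 0) (nhds (K * Real.sqrt 0)) :=
        (continuous_const.mul Real.continuous_sqrt).tendsto 0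
      rw [Real.sqrt_zero, mul_zero] at hc2
      exact hc2.mono_left nhdsWithin_le_nhds
  have h3 := h2.add h1
  rw [zero_add] at h3
  refine h3.congr fun t => ?_
  ring
end

section
/- For any h-periodic function C : ℤ → ℂ with mean value zero over a period, the L-series L(s, C) = Σ_{n≥1} C(n) n^{-s} (Re(s) > 1) equals h^{-s} Σ_{n=1}^{h} C(n) ζ(s, n/h), where ζ(s, x) is the Hurwitz zeta function; in particular L(s, C) extends holomorphically to all of ℂ (the poles of the Hurwitz zeta functions at s = 1 cancel by mean value zero). -/
open Complex

private lemma stmt18_key (h : ℕ) (hh : 0 < h) (C : ℤ → ℂ)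
    (hper : ∀ n : ℤ, C (n + h) = C n) [NeZero h] (n : ℤ) :
    C n = C (((n : ZMod h)).val) := by
  have hdvd : (h : ℤ) ∣ n - (((n : ZMod h)).val : ℤ) := by
    have : ((n - (((n : ZMod h)).val : ℤ) : ℤ) : ZMod h) = 0 := by
      push_cast
      simp [ZMod.natCast_val, ZMod.intCast_cast]
    exact (ZMod.intCast_zmod_eq_zero_iff_dvd _ _).mp this
  obtain ⟨k, hk⟩ := hdvd
  have hkey : ∀ k : ℤ, ∀ m : ℤ, C (m + h * k) = C m := by
    intro k
    induction k using Int.induction_on with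
    | zero => simp
    | succ k ih => intro m; rw [mul_add, mul_one, ← add_assoc]
                   rw [show m + (h:ℤ) * k + h = (m + h * k) + h by ring, hper, ih]
    | pred k ih => intro m
                   have := hper (m + (h:ℤ) * (-k - 1))
                   rw [show m + (h:ℤ) * (-k - 1) + h = m + h * (-(k:ℤ)) by ring] at this
                   rw [show m + (h:ℤ) * (-(k:ℤ)-1) = m + h * (-k - 1) by ring, ← this, ih]
  have h2 := hkey k ((((n : ZMod h)).val : ℤ))
  rw [show ((((n : ZMod h)).val : ℤ)) + (h : ℤ) * k = n by linarith] at h2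
  exact h2

private lemma stmt18_sum_eq (h : ℕ) (hh : 0 < h) (C : ℤ → ℂ)
    (hper : ∀ n : ℤ, C (n + h) = C n) [NeZero h] (g : ZMod h → ℂ) :
    ∑ n ∈ Finset.Icc 1 (h : ℤ), C n * g ((n : ZMod h)) =
      ∑ j : ZMod h, C (j.val) * g j := by
  refine Finset.sum_bij (fun n _ => (n : ZMod h)) (fun _ _ => Finset.mem_univ _) ?_ ?_ ?_
  · intro a ha b hb hab
    simp only [Finset.mem_Icc] at ha hb
    have hab' : ((a : ZMod h)) = (b : ZMod h) := hab
    have : ((a - b : ℤ) : ZMod h) = 0 := by push_cast; rw [hab']; ring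
    have hd : (h : ℤ) ∣ a - b := (ZMod.intCast_zmod_eq_zero_iff_dvd _ _).mp this
    have h0 : a - b = 0 := Int.eq_zero_of_abs_lt_dvd hd (by rw [abs_lt]; omega)
    omega
  · intro j _
    by_cases hj : j = 0
    · refine ⟨(h : ℤ), Finset.mem_Icc.mpr ⟨by exact_mod_cast hh, le_refl _⟩, ?_⟩
      show ((h : ℤ) : ZMod h) = j
      simp [hj]
    · refine ⟨(j.val : ℤ), Finset.mem_Icc.mpr ⟨?_, ?_⟩, ?_⟩
      · have hv : j.val ≠ 0 := by simpa [ZMod.val_eq_zero] using hj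
        omega
      · exact_mod_cast (ZMod.val_lt j).le
      · show ((j.val : ℤ) : ZMod h) = j
        rw [Int.cast_natCast]
        exact ZMod.natCast_zmod_val j
  · intro n hn
    rw [stmt18_key h hh C hper n]

theorem stmt_18 (h : ℕ) (hh : 0 < h) (C : ℤ → ℂ)
    (hper : ∀ n : ℤ, C (n + h) = C n)
    (hmean : ∑ n ∈ Finset.Icc 1 (h : ℤ), C n = 0) :
    (∀ s : ℂ, 1 < s.re →
      HasSum (fun n : ℕ => C (n + 1) / ((n : ℂ) + 1) ^ s)
        ((h : ℂ) ^ (-s) * ∑ n ∈ Finset.Icc 1 (h : ℤ),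
          C n * HurwitzZeta.hurwitzZeta (((n : ℝ) / (h : ℝ) : ℝ) : UnitAddCircle) s)) ∧
    (∃ F : ℂ → ℂ, Differentiable ℂ F ∧
      (∀ s : ℂ, 1 < s.re → F s = ∑' n : ℕ, C (n + 1) / ((n : ℂ) + 1) ^ s) ∧
      (∀ s : ℂ, s ≠ 1 → F s = (h : ℂ) ^ (-s) * ∑ n ∈ Finset.Icc 1 (h : ℤ),
          C n * HurwitzZeta.hurwitzZeta (((n : ℝ) / (h : ℝ) : ℝ) : UnitAddCircle) s)) := by
  have : NeZero h := ⟨hh.ne'⟩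
  set Φ : ZMod h → ℂ := fun j => C (j.val) with hΦ
  -- the Icc sum equals the ZMod LFunction sum
  have hsum : ∀ s : ℂ, ∑ n ∈ Finset.Icc 1 (h : ℤ),
      C n * HurwitzZeta.hurwitzZeta (((n : ℝ) / (h : ℝ) : ℝ) : UnitAddCircle) s =
      ∑ j : ZMod h, Φ j * HurwitzZeta.hurwitzZeta (ZMod.toAddCircle j) s := by
    intro s
    rw [← stmt18_sum_eq h hh C hper (fun j => HurwitzZeta.hurwitzZeta (ZMod.toAddCircle j) s)]
    refine Finset.sum_congr rfl fun n _ => ?_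
    rw [ZMod.toAddCircle_intCast]
  have hLF : ∀ s : ℂ, ZMod.LFunction Φ s = (h : ℂ) ^ (-s) * ∑ n ∈ Finset.Icc 1 (h : ℤ),
      C n * HurwitzZeta.hurwitzZeta (((n : ℝ) / (h : ℝ) : ℝ) : UnitAddCircle) s := by
    intro s; rw [ZMod.LFunction, hsum]
  have hΦn : ∀ n : ℕ, Φ (n : ZMod h) = C (n : ℤ) := by
    intro n
    have e : ((n : ℕ) : ZMod h) = (((n : ℤ)) : ZMod h) := by push_cast; rfl
    rw [hΦ, e]
    exact (stmt18_key h hh C hper (n : ℤ)).symm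
  -- HasSum statement
  have hHS : ∀ s : ℂ, 1 < s.re →
      HasSum (fun n : ℕ => C (n + 1) / ((n : ℂ) + 1) ^ s) (ZMod.LFunction Φ s) := by
    intro s hs
    have hsum0 : Summable (fun n : ℕ => LSeries.term (Φ ·) s n) :=
      ZMod.LSeriesSummable_of_one_lt_re Φ hs
    have hHS0 : HasSum (fun n : ℕ => LSeries.term (Φ ·) s n) (ZMod.LFunction Φ s) := by
      rw [ZMod.LFunction_eq_LSeries Φ hs]
      exact hsum0.hasSum
    have h1 : HasSum (fun n : ℕ => LSeries.term (Φ ·) s (n + 1)) (ZMod.LFunction Φ s) := by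
      rw [hasSum_nat_add_iff 1]
      simpa [LSeries.term_zero] using hHS0
    have e : (fun n : ℕ => C (n + 1) / ((n : ℂ) + 1) ^ s)
        = fun n : ℕ => LSeries.term (Φ ·) s (n + 1) := by
      funext n
      rw [LSeries.term_of_ne_zero (Nat.succ_ne_zero n) (Φ ·) s, hΦn (n + 1)]
      push_cast
      ring
    rw [e]
    exact h1
  refine ⟨fun s hs => (hLF s) ▸ hHS s hs, ZMod.LFunction Φ, ?_, ?_, fun s _ => hLF s⟩
  · refine ZMod.differentiable_LFunction_of_sum_zero ?_
    have e := stmt18_sum_eq h hh C hper (fun _ => (1 : ℂ))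
    simp only [mul_one] at e
    simp only [hΦ, ← e]
    exact hmean
  · intro s hs
    exact ((hHS s hs).tsum_eq).symm
end
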